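/- Let $|\Psi\rangle = \sum_{j=0}^{r-1}\lambda_j|jj\rangle$ be a bipartite unit vector with $\lambda_j > 0$ for at least two indices (i.e., entangled), and let $\Omega = (P_1 + P_2)/2$ where $P_1 = \sum_j |jj\rangle\langle jj|$ and $P_2 = I - |u\rangle\langle u|\otimes(I - |v\rangle\langle v|)$ with $|u\rangle = \frac{1}{\sqrt{r}}\sum_j|j\rangle$ and $|v\rangle = \sum_j \lambda_j|j\rangle$. Then $|\Psi\rangle$ is an eigenvector of $\Omega$ with eigenvalue $1$, and the second largest eigenvalue of $\Omega$ equals $\frac{1}{2}(1 + \sqrt{(r-1)/r}) < 1$; equivalently, the spectral gap of $\Omega$ is $\frac{1}{2}(1 - \sqrt{(r-1)/r}) > 0$. -/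

import Mathlib

open scoped Kronecker Matrix

namespace Stmt5

variable (r : ℕ)

/-- The Schmidt-form state `|Ψ⟩ = ∑ⱼ λⱼ |jj⟩` in `ℂ^r ⊗ ℂ^r ≅ ℂ^(r×r)`. -/
noncomputable def Psi (lam : Fin r → ℝ) : EuclideanSpace ℂ (Fin r × Fin r) :=
  WithLp.toLp 2 (fun p => if p.1 = p.2 then (lam p.1 : ℂ) else 0)

/-- The rank-one projector `|Ψ⟩⟨Ψ|` as a matrix. -/
noncomputable def PsiProj (lam : Fin r → ℝ) : Matrix (Fin r × Fin r) (Fin r × Fin r) ℂ :=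
  Matrix.of fun p q => Psi r lam p * star (Psi r lam q)

/-- `P₁ = ∑ⱼ |jj⟩⟨jj|`. -/
def P1 : Matrix (Fin r × Fin r) (Fin r × Fin r) ℂ :=
  Matrix.of fun p q => if p = q ∧ p.1 = p.2 then 1 else 0

/-- The outer product `|x⟩⟨x|` of a vector in `ℂ^r`. -/
def outer (x : Fin r → ℂ) : Matrix (Fin r) (Fin r) ℂ :=
  Matrix.of fun i j => x i * star (x j)

/-- `|u⟩ = (1/√r) ∑ⱼ |j⟩`. -/
noncomputable def uVec : Fin r → ℂ := fun _ => (((Real.sqrt r)⁻¹ : ℝ) : ℂ)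

/-- `|v⟩ = ∑ⱼ λⱼ |j⟩`. -/
noncomputable def vVec (lam : Fin r → ℝ) : Fin r → ℂ := fun j => (lam j : ℂ)

/-- `P₂ = I - |u⟩⟨u| ⊗ (I - |v⟩⟨v|)`. -/
noncomputable def P2 (lam : Fin r → ℝ) : Matrix (Fin r × Fin r) (Fin r × Fin r) ℂ :=
  1 - (outer r (uVec r)) ⊗ₖ (1 - outer r (vVec r lam))

/-- The verification operator `Ω = (P₁ + P₂)/2`. -/
noncomputable def Omega (lam : Fin r → ℝ) : Matrix (Fin r × Fin r) (Fin r × Fin r) ℂ :=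
  (2 : ℂ)⁻¹ • (P1 r + P2 r lam)

-- abbreviation for Q
noncomputable def Qm (lam : Fin r → ℝ) : Matrix (Fin r × Fin r) (Fin r × Fin r) ℂ :=
  (outer r (uVec r)) ⊗ₖ (1 - outer r (vVec r lam))

variable {r}

lemma Qm_apply (lam : Fin r → ℝ) (p q : Fin r × Fin r) :
    Qm r lam p q = ((r : ℂ))⁻¹ * ((if p.2 = q.2 then 1 else 0) - lam p.2 * lam q.2) := by
  simp only [Qm, Matrix.kroneckerMap_apply, outer, uVec, vVec, Matrix.of_apply,
    Matrix.sub_apply, Matrix.one_apply]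
  have h1 : ((((Real.sqrt r)⁻¹ : ℝ)) : ℂ) * star ((((Real.sqrt r)⁻¹ : ℝ)) : ℂ) = ((r : ℂ))⁻¹ := by
    rw [Complex.star_def, Complex.conj_ofReal, ← Complex.ofReal_mul, ← mul_inv,
      Real.mul_self_sqrt (by positivity)]
    push_cast; ring
  rw [h1]
  congr 1
  rw [Complex.star_def, Complex.conj_ofReal]

lemma P1_apply (p q : Fin r × Fin r) :
    P1 r p q = if p = q ∧ p.1 = p.2 then 1 else 0 := rfl

lemma P1_mul_P1 : P1 r * P1 r = P1 r := by
  ext p q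
  simp only [Matrix.mul_apply, P1_apply, ite_and]
  rw [Finset.sum_eq_single p]
  · split_ifs <;> simp_all
  · intro b _ hb
    split_ifs <;> simp_all
  · simp



namespace Aux

noncomputable def psiF (lam : Fin r → ℝ) : Fin r × Fin r → ℂ :=
  fun p => if p.1 = p.2 then (lam p.1 : ℂ) else 0

lemma Psi_eq (lam : Fin r → ℝ) : Psi r lam = psiF lam := rfl

lemma star_psiF (lam : Fin r → ℝ) (p) : star (psiF lam p) = psiF lam p := by
  unfold psiF; split_ifs <;> simp [Complex.star_def, Complex.conj_ofReal]

lemma PsiProj_apply (lam : Fin r → ℝ) (p q) :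
    PsiProj r lam p q = psiF lam p * psiF lam q := by
  simp [PsiProj, Psi_eq, star_psiF]

lemma P1_mul (A : Matrix (Fin r × Fin r) (Fin r × Fin r) ℂ) (p q) :
    (P1 r * A) p q = if p.1 = p.2 then A p q else 0 := by
  simp only [Matrix.mul_apply, P1_apply, ite_and, ite_mul, one_mul, zero_mul]
  rw [Finset.sum_ite_eq]
  simp

lemma mul_P1 (A : Matrix (Fin r × Fin r) (Fin r × Fin r) ℂ) (p q) :
    (A * P1 r) p q = if q.1 = q.2 then A p q else 0 := by
  simp only [Matrix.mul_apply, P1_apply]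
  have : ∀ x : Fin r × Fin r, A p x * (if x = q ∧ x.1 = x.2 then 1 else 0)
      = if x = q then (if q.1 = q.2 then A p q else 0) else 0 := by
    intro x
    split_ifs with h1 h2 h2 <;> simp_all
  simp only [this]
  rw [Finset.sum_ite_eq']
  simp

lemma Pi_mul (lam : Fin r → ℝ) (A : Matrix (Fin r × Fin r) (Fin r × Fin r) ℂ) (p q) :
    (PsiProj r lam * A) p q = psiF lam p * ∑ k, (lam k : ℂ) * A (k, k) q := by
  simp only [Matrix.mul_apply, PsiProj_apply, mul_assoc, ← Finset.mul_sum]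
  congr 1
  rw [Fintype.sum_prod_type]
  refine Finset.sum_congr rfl fun a _ => ?_
  rw [Finset.sum_eq_single a]
  · simp [psiF]
  · intro b _ hb; simp [psiF, Ne.symm hb]
  · simp

lemma mul_Pi (lam : Fin r → ℝ) (A : Matrix (Fin r × Fin r) (Fin r × Fin r) ℂ) (p q) :
    (A * PsiProj r lam) p q = (∑ k, A p (k, k) * (lam k : ℂ)) * psiF lam q := by
  simp only [Matrix.mul_apply, PsiProj_apply, ← mul_assoc, ← Finset.sum_mul]
  congr 1
  rw [Fintype.sum_prod_type]
  refine Finset.sum_congr rfl fun a _ => ?_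
  rw [Finset.sum_eq_single a]
  · simp [psiF]
  · intro b _ hb; simp [psiF, Ne.symm hb]
  · simp

lemma hsum (lam : Fin r → ℝ) (hnorm : ∑ j, (lam j) ^ 2 = 1) :
    ∑ k, (lam k : ℂ) * (lam k : ℂ) = 1 := by
  have : ((∑ j, lam j ^ 2 : ℝ) : ℂ) = 1 := by rw [hnorm]; norm_num
  push_cast at this
  simpa [pow_two] using this

lemma P1_mul_P1' : P1 r * P1 r = P1 r := by
  ext p q
  rw [P1_mul]
  by_cases hp : p.1 = p.2 <;> simp [P1_apply, hp]

lemma P1_mul_Pi (lam : Fin r → ℝ) : P1 r * PsiProj r lam = PsiProj r lam := by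
  ext p q
  rw [P1_mul, PsiProj_apply]
  by_cases hp : p.1 = p.2 <;> simp [PsiProj_apply, psiF, hp]

lemma Pi_mul_P1 (lam : Fin r → ℝ) : PsiProj r lam * P1 r = PsiProj r lam := by
  ext p q
  rw [mul_P1, PsiProj_apply]
  by_cases hq : q.1 = q.2 <;> simp [PsiProj_apply, psiF, hq]

lemma Pi_mul_Pi (lam : Fin r → ℝ) (hnorm : ∑ j, (lam j) ^ 2 = 1) :
    PsiProj r lam * PsiProj r lam = PsiProj r lam := by
  ext p q
  rw [Pi_mul, PsiProj_apply]
  have h : ∀ k : Fin r, (lam k : ℂ) * (PsiProj r lam (k, k) q)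
      = ((lam k : ℂ) * (lam k : ℂ)) * psiF lam q := by
    intro k; rw [PsiProj_apply]; simp [psiF]; ring
  rw [Finset.sum_congr rfl fun k _ => h k, ← Finset.sum_mul, hsum lam hnorm, one_mul]

lemma Pi_mul_Q (lam : Fin r → ℝ) (hnorm : ∑ j, (lam j) ^ 2 = 1) :
    PsiProj r lam * Qm r lam = 0 := by
  ext p q
  rw [Pi_mul]
  have h : ∀ k : Fin r, (lam k : ℂ) * (Qm r lam (k, k) q)
      = ((r:ℂ))⁻¹ * ((if k = q.2 then (lam k : ℂ) else 0) - ((lam k : ℂ) * lam k) * lam q.2) := by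
    intro k; rw [Qm_apply]; simp only; split_ifs <;> ring
  rw [Finset.sum_congr rfl fun k _ => h k]
  simp [Finset.sum_sub_distrib, ← Finset.mul_sum, ← Finset.sum_mul, hsum lam hnorm,
    Finset.sum_ite_eq' Finset.univ q.2 (fun k => (lam k : ℂ))]

lemma Q_mul_Pi (lam : Fin r → ℝ) (hnorm : ∑ j, (lam j) ^ 2 = 1) :
    Qm r lam * PsiProj r lam = 0 := by
  ext p q
  rw [mul_Pi]
  have h : ∀ k : Fin r, (Qm r lam p (k, k)) * (lam k : ℂ)
      = ((r:ℂ))⁻¹ * ((if p.2 = k then (lam k : ℂ) else 0) - lam p.2 * ((lam k : ℂ) * lam k)) := by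
    intro k; rw [Qm_apply]; simp only; split_ifs <;> ring
  rw [Finset.sum_congr rfl fun k _ => h k]
  simp [Finset.sum_sub_distrib, ← Finset.mul_sum, hsum lam hnorm,
    Finset.sum_ite_eq Finset.univ p.2 (fun k => (lam k : ℂ))]

lemma outer_u_apply (i j : Fin r) : outer r (uVec r) i j = ((r:ℂ))⁻¹ := by
  simp only [outer, uVec, Matrix.of_apply]
  rw [Complex.star_def, Complex.conj_ofReal, ← Complex.ofReal_mul, ← mul_inv,
    Real.mul_self_sqrt (by positivity)]
  push_cast; ring

lemma outer_u_mul (hr : (r:ℂ) ≠ 0) : outer r (uVec r) * outer r (uVec r) = outer r (uVec r) := by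
  ext i j
  simp only [Matrix.mul_apply, outer_u_apply, Finset.sum_const, Finset.card_fin, nsmul_eq_mul]
  field_simp

lemma outer_v_mul (lam : Fin r → ℝ) (hnorm : ∑ j, (lam j) ^ 2 = 1) :
    outer r (vVec r lam) * outer r (vVec r lam) = outer r (vVec r lam) := by
  ext i j
  simp only [Matrix.mul_apply, outer, vVec, Matrix.of_apply, Complex.star_def,
    Complex.conj_ofReal]
  have h : ∀ k : Fin r, (lam i : ℂ) * lam k * ((lam k : ℂ) * lam j)
      = ((lam k : ℂ) * lam k) * ((lam i : ℂ) * lam j) := by intro k; ring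
  rw [Finset.sum_congr rfl fun k _ => h k, ← Finset.sum_mul, hsum lam hnorm, one_mul]

lemma Q_mul_Q (lam : Fin r → ℝ) (hnorm : ∑ j, (lam j) ^ 2 = 1) (hr : (r:ℂ) ≠ 0) :
    Qm r lam * Qm r lam = Qm r lam := by
  have hW : (1 - outer r (vVec r lam)) * (1 - outer r (vVec r lam))
      = 1 - outer r (vVec r lam) := by
    rw [Matrix.mul_sub, Matrix.mul_one, Matrix.sub_mul, Matrix.one_mul, outer_v_mul lam hnorm]
    abel
  rw [Qm, ← Matrix.mul_kronecker_mul, outer_u_mul hr, hW]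

lemma P1_Q_P1 (lam : Fin r → ℝ) :
    P1 r * Qm r lam * P1 r = ((r:ℂ))⁻¹ • (P1 r - PsiProj r lam) := by
  rw [mul_assoc]
  ext p q
  rw [P1_mul]
  simp only [Matrix.smul_apply, Matrix.sub_apply, P1_apply, PsiProj_apply, smul_eq_mul]
  by_cases hp : p.1 = p.2
  · rw [if_pos hp, mul_P1]
    by_cases hq : q.1 = q.2
    · rw [if_pos hq, Qm_apply]
      have hpq : (p = q) ↔ (p.2 = q.2) := by
        constructor
        · intro h; rw [h]
        · intro h
          have h1 : p.1 = q.1 := by rw [hp, h, ← hq]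
          exact Prod.ext_iff.mpr ⟨h1, h⟩
      simp only [psiF, if_pos hp, if_pos hq]
      by_cases h2 : p.2 = q.2
      · rw [if_pos h2, if_pos ⟨hpq.mpr h2, hp⟩]
        rw [hp, hq]
      · rw [if_neg h2, if_neg (by rintro ⟨h, -⟩; exact h2 (hpq.mp h))]
        rw [hp, hq]
    · rw [if_neg hq]
      have : ¬(p = q ∧ p.1 = p.2) := by rintro ⟨rfl, h⟩; exact hq h
      simp [psiF, this, hq]
  · rw [if_neg hp]
    have : ¬(p = q ∧ p.1 = p.2) := by rintro ⟨rfl, h⟩; exact hp h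
    simp [psiF, this, hp]

lemma Q_P1_Q (lam : Fin r → ℝ) (hnorm : ∑ j, (lam j) ^ 2 = 1) :
    Qm r lam * P1 r * Qm r lam = ((r:ℂ))⁻¹ • Qm r lam := by
  ext p q
  rw [Matrix.mul_apply]
  have h1 : ∀ x : Fin r × Fin r, (Qm r lam * P1 r) p x * Qm r lam x q
      = if x.1 = x.2 then Qm r lam p x * Qm r lam x q else 0 := by
    intro x; rw [mul_P1]; split_ifs <;> simp
  rw [Finset.sum_congr rfl fun x _ => h1 x, Fintype.sum_prod_type]
  have h2 : ∀ a : Fin r, (∑ b : Fin r, if a = b then Qm r lam p (a, b) * Qm r lam (a, b) q else 0)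
      = Qm r lam p (a, a) * Qm r lam (a, a) q := by
    intro a
    rw [Finset.sum_ite_eq Finset.univ a (fun b => Qm r lam p (a, b) * Qm r lam (a, b) q)]
    simp
  rw [Finset.sum_congr rfl fun a _ => h2 a]
  have h3 : ∀ a : Fin r, Qm r lam p (a, a) * Qm r lam (a, a) q
      = ((r:ℂ))⁻¹ * ((r:ℂ))⁻¹ *
        ((if p.2 = a then (if a = q.2 then (1:ℂ) else 0) else 0)
          - (if p.2 = a then ((lam a : ℂ) * lam q.2) else 0)
          - (if a = q.2 then ((lam p.2 : ℂ) * lam a) else 0)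
          + ((lam p.2 : ℂ) * lam q.2) * ((lam a : ℂ) * lam a)) := by
    intro a
    rw [Qm_apply, Qm_apply]
    simp only
    split_ifs <;> ring
  rw [Finset.sum_congr rfl fun a _ => h3 a]
  simp only [Finset.sum_add_distrib, Finset.sum_sub_distrib, ← Finset.mul_sum,
    Finset.sum_ite_eq Finset.univ p.2, Finset.sum_ite_eq' Finset.univ q.2,
    Finset.mem_univ, if_pos, hsum lam hnorm]
  rw [Matrix.smul_apply, Qm_apply]
  simp only [smul_eq_mul]
  ring

lemma P1_mulVec (v : Fin r × Fin r → ℂ) (p : Fin r × Fin r) :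
    (P1 r *ᵥ v) p = if p.1 = p.2 then v p else 0 := by
  simp only [Matrix.mulVec, dotProduct, P1_apply, ite_and, ite_mul, one_mul, zero_mul]
  rw [Finset.sum_ite_eq]
  simp

lemma Q_mulVec_Psi (lam : Fin r → ℝ) (hnorm : ∑ j, (lam j) ^ 2 = 1) :
    Qm r lam *ᵥ Psi r lam = 0 := by
  funext p
  simp only [Matrix.mulVec, dotProduct, Psi_eq]
  have h1 : ∀ x : Fin r × Fin r, Qm r lam p x * psiF lam x
      = if x.1 = x.2 then Qm r lam p x * (lam x.1 : ℂ) else 0 := by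
    intro x; unfold psiF; split_ifs <;> simp
  rw [Finset.sum_congr rfl fun x _ => h1 x, Fintype.sum_prod_type]
  have h2 : ∀ a : Fin r, (∑ b : Fin r, if a = b then Qm r lam p (a, b) * (lam a : ℂ) else 0)
      = Qm r lam p (a, a) * (lam a : ℂ) := by
    intro a
    rw [Finset.sum_ite_eq Finset.univ a (fun b => Qm r lam p (a, b) * (lam a : ℂ))]
    simp
  rw [Finset.sum_congr rfl fun a _ => h2 a]
  have h3 : ∀ a : Fin r, Qm r lam p (a, a) * (lam a : ℂ)
      = ((r:ℂ))⁻¹ * ((if p.2 = a then (lam a : ℂ) else 0) - lam p.2 * ((lam a : ℂ) * lam a)) := by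
    intro a; rw [Qm_apply]; simp only; split_ifs <;> ring
  rw [Finset.sum_congr rfl fun a _ => h3 a]
  simp [Finset.sum_sub_distrib, ← Finset.mul_sum, hsum lam hnorm,
    Finset.sum_ite_eq Finset.univ p.2 (fun k => (lam k : ℂ))]

lemma P2_eq (lam : Fin r → ℝ) : P2 r lam = 1 - Qm r lam := rfl

lemma omega_fix (lam : Fin r → ℝ) (hnorm : ∑ j, (lam j) ^ 2 = 1) :
    Omega r lam *ᵥ Psi r lam = Psi r lam := by
  unfold Omega
  rw [P2_eq, Matrix.smul_mulVec, Matrix.add_mulVec, Matrix.sub_mulVec,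
    Matrix.one_mulVec, Q_mulVec_Psi lam hnorm]
  have hfix : P1 r *ᵥ Psi r lam = Psi r lam := by
    funext p
    rw [P1_mulVec]
    unfold Psi
    split_ifs with h <;> simp [h]
  rw [hfix]
  funext p
  simp only [Pi.smul_apply, Pi.add_apply, Pi.sub_apply, Pi.zero_apply, smul_eq_mul]
  ring

lemma P1_herm : (P1 r)ᴴ = P1 r := by
  ext p q
  simp only [Matrix.conjTranspose_apply, P1_apply]
  have hiff : (q = p ∧ q.1 = q.2) ↔ (p = q ∧ p.1 = p.2) := by
    constructor <;> rintro ⟨rfl, h⟩ <;> exact ⟨rfl, h⟩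
  rw [if_congr hiff rfl rfl]
  split_ifs <;> simp

lemma Pi_herm (lam : Fin r → ℝ) : (PsiProj r lam)ᴴ = PsiProj r lam := by
  ext p q
  simp only [Matrix.conjTranspose_apply, PsiProj_apply, star_mul', star_psiF]
  ring

lemma Q_herm (lam : Fin r → ℝ) : (Qm r lam)ᴴ = Qm r lam := by
  ext p q
  rw [Matrix.conjTranspose_apply, Qm_apply, Qm_apply]
  rw [star_mul']
  have h1 : star (((r:ℂ))⁻¹) = ((r:ℂ))⁻¹ := by
    simp
  have h2 : star ((if q.2 = p.2 then (1:ℂ) else 0) - (lam q.2 : ℂ) * lam p.2)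
      = (if p.2 = q.2 then (1:ℂ) else 0) - (lam p.2 : ℂ) * lam q.2 := by
    rw [star_sub, star_mul']
    simp only [Complex.star_def, Complex.conj_ofReal, apply_ite (starRingEnd ℂ), map_one, map_zero]
    rw [mul_comm]
    congr 1
    simp [eq_comm]
  rw [h1, h2, mul_comm]

lemma omega_herm (lam : Fin r → ℝ) : (Omega r lam)ᴴ = Omega r lam := by
  unfold Omega
  rw [P2_eq, Matrix.conjTranspose_smul, Matrix.conjTranspose_add, P1_herm,
    Matrix.conjTranspose_sub, Matrix.conjTranspose_one, Q_herm]
  congr 1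
  simp

noncomputable def Nm (lam : Fin r → ℝ) : Matrix (Fin r × Fin r) (Fin r × Fin r) ℂ :=
  P1 r - Qm r lam - (2:ℂ) • PsiProj r lam

noncomputable def Mm (lam : Fin r → ℝ) : Matrix (Fin r × Fin r) (Fin r × Fin r) ℂ :=
  (1 - PsiProj r lam) * Omega r lam * (1 - PsiProj r lam)

section Core

variable (lam : Fin r → ℝ)
variable (hnorm : ∑ j, (lam j) ^ 2 = 1) (hr : (r:ℂ) ≠ 0)
include hnorm hr

omit hnorm hr in
lemma omega_eq : Omega r lam = (2:ℂ)⁻¹ • (P1 r + 1 - Qm r lam) := by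
  unfold Omega
  rw [P2_eq]
  congr 1
  abel

lemma Pi_mul_Omega : PsiProj r lam * Omega r lam = PsiProj r lam := by
  rw [omega_eq, Matrix.mul_smul, Matrix.mul_sub, Matrix.mul_add, Matrix.mul_one,
    Pi_mul_P1, Pi_mul_Q lam hnorm]
  module

lemma Omega_mul_Pi : Omega r lam * PsiProj r lam = PsiProj r lam := by
  rw [omega_eq, Matrix.smul_mul, Matrix.sub_mul, Matrix.add_mul, Matrix.one_mul,
    P1_mul_Pi, Q_mul_Pi lam hnorm]
  module

lemma M_eq : Mm lam = Omega r lam - PsiProj r lam := by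
  unfold Mm
  rw [Matrix.sub_mul, Matrix.one_mul, Pi_mul_Omega lam hnorm hr, Matrix.mul_sub, Matrix.mul_one,
    Matrix.sub_mul, Omega_mul_Pi lam hnorm hr, Pi_mul_Pi lam hnorm]
  abel

lemma N_eq : Nm lam = (2:ℂ) • Mm lam - 1 := by
  rw [M_eq lam hnorm hr, omega_eq]
  unfold Nm
  module

lemma N_sq : Nm lam * Nm lam
    = P1 r + Qm r lam - P1 r * Qm r lam - Qm r lam * P1 r := by
  unfold Nm
  simp only [Matrix.sub_mul, Matrix.mul_sub, Matrix.smul_mul, Matrix.mul_smul,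
    P1_mul_P1', Q_mul_Q lam hnorm hr, Pi_mul_Pi lam hnorm, P1_mul_Pi, Pi_mul_P1,
    Pi_mul_Q lam hnorm, Q_mul_Pi lam hnorm, smul_zero]
  module

lemma B_sq : (Nm lam * Nm lam) * (Nm lam * Nm lam)
    = ((1:ℂ) - (r:ℂ)⁻¹) • (Nm lam * Nm lam) + (r:ℂ)⁻¹ • PsiProj r lam := by
  have hAQA : P1 r * (Qm r lam * P1 r) = (r:ℂ)⁻¹ • (P1 r - PsiProj r lam) := by
    rw [← mul_assoc]; exact P1_Q_P1 lam
  have hQAQ : Qm r lam * (P1 r * Qm r lam) = (r:ℂ)⁻¹ • Qm r lam := by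
    rw [← mul_assoc]; exact Q_P1_Q lam hnorm
  have hAA' : ∀ X, P1 r * (P1 r * X) = P1 r * X := by
    intro X; rw [← mul_assoc, P1_mul_P1']
  have hQQ' : ∀ X, Qm r lam * (Qm r lam * X) = Qm r lam * X := by
    intro X; rw [← mul_assoc, Q_mul_Q lam hnorm hr]
  rw [N_sq lam hnorm hr]
  simp only [Matrix.add_mul, Matrix.mul_add, Matrix.sub_mul, Matrix.mul_sub, mul_assoc,
    hAA', hQQ', hAQA, hQAQ, P1_mul_P1', Q_mul_Q lam hnorm hr, Matrix.mul_smul,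
    Matrix.smul_mul, P1_mul_Pi, Q_mul_Pi lam hnorm, Pi_mul_Q lam hnorm,
    Matrix.mul_sub, smul_zero, mul_zero, zero_mul, sub_zero]
  module

lemma Pi_mul_N : PsiProj r lam * Nm lam = -(PsiProj r lam) := by
  unfold Nm
  rw [Matrix.mul_sub, Matrix.mul_sub, Matrix.mul_smul, Pi_mul_P1, Pi_mul_Q lam hnorm,
    Pi_mul_Pi lam hnorm]
  module

lemma key0 : (Nm lam * Nm lam) * ((Nm lam * Nm lam) - ((1:ℂ) - (r:ℂ)⁻¹) • 1)
    * (Nm lam + 1) = 0 := by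
  have h1 : (Nm lam * Nm lam) * ((Nm lam * Nm lam) - ((1:ℂ) - (r:ℂ)⁻¹) • 1)
      = (r:ℂ)⁻¹ • PsiProj r lam := by
    rw [Matrix.mul_sub, Matrix.mul_smul, Matrix.mul_one, B_sq lam hnorm hr]
    module
  rw [h1, Matrix.smul_mul, Matrix.mul_add, Matrix.mul_one, Pi_mul_N lam hnorm hr]
  simp

end Core

noncomputable def Pl (c : ℂ) : Polynomial ℂ :=
  (Polynomial.C 2 * Polynomial.X - 1)^2 *
    ((Polynomial.C 2 * Polynomial.X - 1)^2 - Polynomial.C c) * (Polynomial.C 2 * Polynomial.X)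

section Core2

variable (lam : Fin r → ℝ)
variable (hnorm : ∑ j, (lam j) ^ 2 = 1) (hr : (r:ℂ) ≠ 0)
include hnorm hr

lemma aeval_M : Polynomial.aeval (Mm lam) (Pl ((1:ℂ) - (r:ℂ)⁻¹)) = 0 := by
  simp only [Pl, map_mul, map_sub, map_pow, map_one, Polynomial.aeval_X, Polynomial.aeval_C]
  have h2 : (algebraMap ℂ (Matrix (Fin r × Fin r) (Fin r × Fin r) ℂ)) 2 * Mm lam
      = Nm lam + 1 := by
    rw [Algebra.algebraMap_eq_smul_one, smul_mul_assoc, one_mul, N_eq lam hnorm hr]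
    abel
  rw [h2, Algebra.algebraMap_eq_smul_one]
  have h4 : Nm lam + 1 - 1 = Nm lam := by abel
  rw [h4, pow_two]
  have h6 := key0 lam hnorm hr
  rwa [sub_smul, one_smul] at h6

omit hnorm hr in
lemma M_herm : (Mm lam)ᴴ = Mm lam := by
  unfold Mm
  rw [Matrix.conjTranspose_mul, Matrix.conjTranspose_mul, Matrix.conjTranspose_sub,
    Matrix.conjTranspose_one, Pi_herm, omega_herm]
  rw [mul_assoc]

lemma aeval_T : Polynomial.aeval (Matrix.toEuclideanCLM (𝕜 := ℂ) (Mm lam))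
    (Pl ((1:ℂ) - (r:ℂ)⁻¹)) = 0 := by
  rw [Polynomial.aeval_algHom_apply (Matrix.toEuclideanCLM (𝕜 := ℂ)) (Mm lam),
    aeval_M lam hnorm hr, map_zero]

end Core2

section Eig

variable (lam : Fin r → ℝ) (j k : Fin r)

noncomputable def wv : Fin r → ℝ :=
  fun m => if m = j then lam k else if m = k then -lam j else 0

noncomputable def pvec : Fin r × Fin r → ℂ :=
  fun p => if p.1 = p.2 then (wv lam j k p.1 : ℂ) else 0

noncomputable def qvec : Fin r × Fin r → ℂ := fun p => (wv lam j k p.2 : ℂ)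

lemma hort (hjk : j ≠ k) : ∑ m, (lam m : ℂ) * (wv lam j k m : ℂ) = 0 := by
  have h : ∀ m, (lam m : ℂ) * (wv lam j k m : ℂ)
      = (if m = j then (((lam j * lam k : ℝ)) : ℂ) else 0)
        + (if m = k then ((-(lam k * lam j) : ℝ) : ℂ) else 0) := by
    intro m
    unfold wv
    split_ifs with h1 h2 <;> simp_all <;> push_cast <;> ring
  rw [Finset.sum_congr rfl fun m _ => h m, Finset.sum_add_distrib]
  rw [Finset.sum_ite_eq' Finset.univ j, Finset.sum_ite_eq' Finset.univ k]
  simp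
  ring

lemma Q_mulVec (v : Fin r × Fin r → ℂ) (p : Fin r × Fin r) :
    (Qm r lam *ᵥ v) p
      = ((r:ℂ))⁻¹ * ((∑ a, v (a, p.2)) - (lam p.2 : ℂ) * ∑ a, ∑ b, (lam b : ℂ) * v (a, b)) := by
  simp only [Matrix.mulVec, dotProduct, Qm_apply]
  rw [Fintype.sum_prod_type]
  have h : ∀ a b, ((r:ℂ))⁻¹ * ((if p.2 = b then (1:ℂ) else 0) - (lam p.2 : ℂ) * lam b) * v (a,b)
      = ((r:ℂ))⁻¹ * ((if p.2 = b then v (a,b) else 0) - (lam p.2 : ℂ) * ((lam b : ℂ) * v (a,b))) := by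
    intro a b; split_ifs <;> ring
  simp only [h]
  simp only [← Finset.mul_sum, Finset.sum_sub_distrib,
    Finset.sum_ite_eq Finset.univ p.2]
  simp [Finset.mul_sum]

lemma Pi_mulVec (v : Fin r × Fin r → ℂ) (p : Fin r × Fin r) :
    (PsiProj r lam *ᵥ v) p = psiF lam p * ∑ a, (lam a : ℂ) * v (a, a) := by
  simp only [Matrix.mulVec, dotProduct, PsiProj_apply, mul_assoc, ← Finset.mul_sum]
  congr 1
  rw [Fintype.sum_prod_type]
  refine Finset.sum_congr rfl fun a _ => ?_
  rw [Finset.sum_eq_single a]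
  · simp [psiF]
  · intro b _ hb; simp [psiF, Ne.symm hb]
  · simp

lemma hP1p : P1 r *ᵥ pvec lam j k = pvec lam j k := by
  funext p
  rw [P1_mulVec]
  unfold pvec
  split_ifs with h <;> simp [h]

lemma hP1q : P1 r *ᵥ qvec lam j k = pvec lam j k := by
  funext p
  rw [P1_mulVec]
  unfold pvec qvec
  split_ifs with h
  · rw [h]
  · rfl

lemma sum_pvec_col (b : Fin r) : ∑ a, pvec lam j k (a, b) = (wv lam j k b : ℂ) := by
  unfold pvec
  rw [Finset.sum_ite_eq' Finset.univ b]
  simp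

lemma sum_lam_pvec (hjk : j ≠ k) : ∑ a, ∑ b, (lam b : ℂ) * pvec lam j k (a, b) = 0 := by
  have h : ∀ a : Fin r, (∑ b, (lam b : ℂ) * pvec lam j k (a, b))
      = (lam a : ℂ) * (wv lam j k a : ℂ) := by
    intro a
    unfold pvec
    have h2 : ∀ b : Fin r, (lam b : ℂ) * (if (a, b).1 = (a, b).2 then ((wv lam j k a : ℂ)) else 0)
        = if a = b then ((lam b : ℂ) * (wv lam j k a : ℂ)) else 0 := by
      intro b; simp only; split_ifs <;> simp_all
    rw [Finset.sum_congr rfl fun b _ => h2 b, Finset.sum_ite_eq Finset.univ a]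
    simp
  rw [Finset.sum_congr rfl fun a _ => h a]
  exact hort lam j k hjk

lemma hQp (hjk : j ≠ k) : Qm r lam *ᵥ pvec lam j k = ((r:ℂ))⁻¹ • qvec lam j k := by
  funext p
  rw [Q_mulVec, sum_lam_pvec lam j k hjk, sum_pvec_col]
  simp [qvec]

lemma hQq (hjk : j ≠ k) (hr : (r:ℂ) ≠ 0) : Qm r lam *ᵥ qvec lam j k = qvec lam j k := by
  funext p
  rw [Q_mulVec]
  have h1 : ∑ a : Fin r, qvec lam j k (a, p.2) = (r : ℂ) * (wv lam j k p.2 : ℂ) := by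
    simp [qvec, Finset.sum_const, mul_comm]
  have h2 : ∑ a : Fin r, ∑ b, (lam b : ℂ) * qvec lam j k (a, b) = 0 := by
    have : ∀ a : Fin r, ∑ b, (lam b : ℂ) * qvec lam j k (a, b) = 0 := by
      intro a; exact hort lam j k hjk
    simp [this]
  rw [h1, h2]
  unfold qvec
  field_simp
  ring

lemma hPip (hjk : j ≠ k) : PsiProj r lam *ᵥ pvec lam j k = 0 := by
  funext p
  rw [Pi_mulVec]
  have : ∑ a, (lam a : ℂ) * pvec lam j k (a, a) = 0 := by
    have h : ∀ a : Fin r, (lam a : ℂ) * pvec lam j k (a, a)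
        = (lam a : ℂ) * (wv lam j k a : ℂ) := by intro a; simp [pvec]
    rw [Finset.sum_congr rfl fun a _ => h a]
    exact hort lam j k hjk
  rw [this]
  simp

lemma hPiq (hjk : j ≠ k) : PsiProj r lam *ᵥ qvec lam j k = 0 := by
  funext p
  rw [Pi_mulVec]
  have : ∑ a, (lam a : ℂ) * qvec lam j k (a, a) = 0 := hort lam j k hjk
  rw [this]
  simp

lemma eig (hjk : j ≠ k) (hnorm : ∑ j, (lam j) ^ 2 = 1) (hr : (r:ℂ) ≠ 0)
    (sc : ℂ) (hs2c : sc ^ 2 = 1 - ((r:ℂ))⁻¹) :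
    Mm lam *ᵥ (pvec lam j k + (sc - 1) • qvec lam j k)
      = (((1:ℂ) + sc)/2) • (pvec lam j k + (sc - 1) • qvec lam j k) := by
  rw [M_eq lam hnorm hr, Matrix.sub_mulVec, omega_eq lam, Matrix.smul_mulVec,
    Matrix.sub_mulVec, Matrix.add_mulVec, Matrix.one_mulVec]
  simp only [Matrix.mulVec_add, Matrix.mulVec_smul, hP1p lam j k, hP1q lam j k,
    hQp lam j k hjk, hQq lam j k hjk hr, hPip lam j k hjk, hPiq lam j k hjk,
    smul_zero, add_zero]
  match_scalars <;>
    first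
      | ring1
      | linear_combination hs2c/2
      | linear_combination -hs2c/2
      | linear_combination hs2c
      | linear_combination -hs2c

end Eig

lemma mem_spectrum_of_eig (A : Matrix (Fin r × Fin r) (Fin r × Fin r) ℂ) (mu : ℂ)
    (v : Fin r × Fin r → ℂ) (hv : v ≠ 0) (h : A *ᵥ v = mu • v) :
    mu ∈ spectrum ℂ (Matrix.toEuclideanCLM (𝕜 := ℂ) A) := by
  rw [spectrum.mem_iff]
  intro hunit
  set T := Matrix.toEuclideanCLM (𝕜 := ℂ) A with hT
  set xE : EuclideanSpace ℂ (Fin r × Fin r) := (WithLp.equiv 2 _).symm v with hxE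
  have happ : (algebraMap ℂ _ mu - T) xE = 0 := by
    have h1 : T xE = (WithLp.equiv 2 _).symm (A *ᵥ v) := by
      rw [hxE]; rfl
    rw [ContinuousLinearMap.sub_apply, h1, h, Algebra.algebraMap_eq_smul_one,
      ContinuousLinearMap.smul_apply, ContinuousLinearMap.one_apply]
    simp [hxE]
  obtain ⟨u, hu⟩ := hunit
  have h2 : (↑u⁻¹ : EuclideanSpace ℂ (Fin r × Fin r) →L[ℂ] EuclideanSpace ℂ (Fin r × Fin r))
      ((↑u : EuclideanSpace ℂ (Fin r × Fin r) →L[ℂ] EuclideanSpace ℂ (Fin r × Fin r)) xE)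
      = xE := by
    rw [← ContinuousLinearMap.mul_apply, u.inv_mul, ContinuousLinearMap.one_apply]
  rw [hu, happ, map_zero] at h2
  apply hv
  have h3 : v = WithLp.equiv 2 ((Fin r × Fin r) → ℂ) xE := by simp [hxE]
  rw [h3, ← h2]
  simp


lemma spec_subset (lam : Fin r → ℝ) (hnorm : ∑ j, (lam j) ^ 2 = 1) (hr : (r:ℂ) ≠ 0)
    (mu : ℂ) (hmu : mu ∈ spectrum ℂ (Matrix.toEuclideanCLM (𝕜 := ℂ) (Mm lam))) :
    Polynomial.eval mu (Pl ((1:ℂ) - (r:ℂ)⁻¹)) = 0 := by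
  have hr' : r ≠ 0 := by
    intro h; exact hr (by simp [h])
  haveI : Nonempty (Fin r) := ⟨⟨0, Nat.pos_of_ne_zero hr'⟩⟩
  haveI hE : Nontrivial (EuclideanSpace ℂ (Fin r × Fin r)) := by
    refine ⟨0, (WithLp.equiv 2 _).symm (fun _ => 1), fun h0 => ?_⟩
    have h1 := congrArg (WithLp.equiv 2 ((Fin r × Fin r) → ℂ)) h0
    simp only [Equiv.apply_symm_apply, map_zero] at h1
    have h2 := congrFun h1 (Classical.arbitrary _)
    simp at h2
  haveI : Nontrivial (EuclideanSpace ℂ (Fin r × Fin r) →L[ℂ] EuclideanSpace ℂ (Fin r × Fin r)) := by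
    refine ⟨1, 0, fun h => ?_⟩
    obtain ⟨x, y, hxy⟩ := exists_pair_ne (EuclideanSpace ℂ (Fin r × Fin r))
    have h1 : x - y ≠ 0 := sub_ne_zero.mpr hxy
    have h2 := congrArg (fun (f : EuclideanSpace ℂ (Fin r × Fin r) →L[ℂ] _) => f (x - y)) h
    simp only [ContinuousLinearMap.one_apply, ContinuousLinearMap.zero_apply] at h2
    exact h1 h2
  have h1 : Polynomial.eval mu (Pl ((1:ℂ) - (r:ℂ)⁻¹))
      ∈ spectrum ℂ (Polynomial.aeval (Matrix.toEuclideanCLM (𝕜 := ℂ) (Mm lam))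
        (Pl ((1:ℂ) - (r:ℂ)⁻¹))) :=
    spectrum.subset_polynomial_aeval _ _ ⟨mu, hmu, rfl⟩
  rw [aeval_T lam hnorm hr, spectrum.zero_eq] at h1
  simpa using h1

lemma roots_classify (mu sc : ℂ) (hs2c : sc ^ 2 = 1 - ((r:ℂ))⁻¹)
    (h : Polynomial.eval mu (Pl ((1:ℂ) - (r:ℂ)⁻¹)) = 0) :
    mu = 0 ∨ mu = 1/2 ∨ mu = (1 + sc)/2 ∨ mu = (1 - sc)/2 := by
  simp only [Pl, Polynomial.eval_mul, Polynomial.eval_sub, Polynomial.eval_pow,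
    Polynomial.eval_one, Polynomial.eval_C, Polynomial.eval_X, mul_eq_zero] at h
  rcases h with (h | h) | h
  · rcases pow_eq_zero_iff (two_ne_zero) |>.mp h |> sub_eq_zero.mp |> Eq.symm with h2
    right; left
    field_simp
    linear_combination -h2
  · have h2 : (2*mu - 1 - sc) * (2*mu - 1 + sc) = 0 := by
      linear_combination h - hs2c
    rcases mul_eq_zero.mp h2 with h3 | h3
    · right; right; left
      field_simp
      linear_combination h3
    · right; right; right
      field_simp
      linear_combination h3
  · rcases h with h3 | h3
    · exact absurd h3 two_ne_zero
    · exact Or.inl h3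

end Aux
/-- For an entangled Schmidt-form state, `|Ψ⟩` is an eigenvector of `Ω` with eigenvalue 1,
and the second largest eigenvalue of `Ω` (the norm of `Ω` restricted to the orthogonal
complement of `|Ψ⟩`) equals `(1 + √((r-1)/r))/2 < 1`; equivalently the spectral gap is
`(1 - √((r-1)/r))/2 > 0`. -/
theorem Omega_eigen_and_second_eigenvalue (lam : Fin r → ℝ) (hlam : ∀ j, 0 ≤ lam j)
    (hnorm : ∑ j, (lam j) ^ 2 = 1)
    (hent : ∃ j k : Fin r, j ≠ k ∧ 0 < lam j ∧ 0 < lam k) :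
    Omega r lam *ᵥ Psi r lam = Psi r lam ∧
    ‖Matrix.toEuclideanCLM (𝕜 := ℂ) (n := Fin r × Fin r)
        ((1 - PsiProj r lam) * Omega r lam * (1 - PsiProj r lam))‖
      = (1 + Real.sqrt (((r : ℝ) - 1) / r)) / 2 ∧
    (1 + Real.sqrt (((r : ℝ) - 1) / r)) / 2 < 1 := by
  obtain ⟨j, k, hjk, hjpos, hkpos⟩ := hent
  have hr2 : 2 ≤ r := by
    have h1 := j.isLt; have h2 := k.isLt
    have h3 : (j : ℕ) ≠ (k : ℕ) := fun h => hjk (Fin.ext h)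
    omega
  have hr0 : r ≠ 0 := by omega
  have hrC : (r : ℂ) ≠ 0 := Nat.cast_ne_zero.mpr hr0
  have hrR2 : (2 : ℝ) ≤ (r : ℝ) := by exact_mod_cast hr2
  set s : ℝ := Real.sqrt (((r : ℝ) - 1) / r) with hs
  have hfracpos : 0 < ((r : ℝ) - 1) / r := div_pos (by linarith) (by linarith)
  have hfrac1 : ((r : ℝ) - 1) / r < 1 := by
    rw [div_lt_one (by linarith)]; linarith
  have hs0 : 0 < s := Real.sqrt_pos.mpr hfracpos
  have hs1 : s < 1 := by
    have h := Real.sqrt_lt_sqrt (le_of_lt hfracpos) hfrac1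
    rw [Real.sqrt_one] at h
    exact h
  have hsq : s ^ 2 = ((r : ℝ) - 1) / r := Real.sq_sqrt (le_of_lt hfracpos)
  have hs2c : ((s : ℝ) : ℂ) ^ 2 = 1 - ((r : ℂ))⁻¹ := by
    have h1 : ((s : ℝ) : ℂ) ^ 2 = ((s ^ 2 : ℝ) : ℂ) := by push_cast; ring
    rw [h1, hsq]
    have h2 : ((r : ℝ) : ℂ) = (r : ℂ) := by push_cast; ring
    push_cast
    field_simp
  have htarget : ‖((1 + ((s : ℝ) : ℂ)) / 2)‖ = (1 + s) / 2 := by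
    have h1 : ((1 + ((s : ℝ) : ℂ)) / 2) = (((1 + s) / 2 : ℝ) : ℂ) := by push_cast; ring
    rw [h1, Complex.norm_real, Real.norm_eq_abs, abs_of_nonneg (by linarith)]
  refine ⟨Aux.omega_fix lam hnorm, ?_, by linarith⟩
  have hMm : (1 - PsiProj r lam) * Omega r lam * (1 - PsiProj r lam) = Aux.Mm lam := rfl
  rw [hMm]
  set T := Matrix.toEuclideanCLM (𝕜 := ℂ) (Aux.Mm lam) with hT
  have hsa : IsSelfAdjoint T := by
    rw [IsSelfAdjoint, hT, ← map_star]
    congr 1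
    rw [Matrix.star_eq_conjTranspose]
    exact Aux.M_herm lam
  have hwj : Aux.wv lam j k j = lam k := by simp [Aux.wv]
  have heig := Aux.eig lam j k hjk hnorm hrC ((s : ℝ) : ℂ) hs2c
  have hx0 : Aux.pvec lam j k + (((s : ℝ) : ℂ) - 1) • Aux.qvec lam j k ≠ 0 := by
    intro h0
    have h1 := congrFun h0 (j, j)
    simp only [Pi.add_apply, Pi.smul_apply, Pi.zero_apply, smul_eq_mul] at h1
    have hp : Aux.pvec lam j k (j, j) = (lam k : ℂ) := by simp [Aux.pvec, hwj]
    have hq : Aux.qvec lam j k (j, j) = (lam k : ℂ) := by simp [Aux.qvec, hwj]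
    rw [hp, hq] at h1
    have h2 : ((s : ℝ) : ℂ) * (lam k : ℂ) = 0 := by linear_combination h1
    rcases mul_eq_zero.mp h2 with h3 | h3
    · have h4 : s = 0 := by exact_mod_cast h3
      linarith
    · have h4 : lam k = 0 := by exact_mod_cast h3
      linarith
  have hmem : ((1 + ((s : ℝ) : ℂ)) / 2) ∈ spectrum ℂ T := by
    refine Aux.mem_spectrum_of_eig (Aux.Mm lam) _ _ hx0 ?_
    exact heig
  have hsub : ∀ mu ∈ spectrum ℂ T,
      mu = 0 ∨ mu = 1 / 2 ∨ mu = (1 + ((s : ℝ) : ℂ)) / 2 ∨ mu = (1 - ((s : ℝ) : ℂ)) / 2 :=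
    fun mu hmu =>
      Aux.roots_classify mu _ hs2c (Aux.spec_subset lam hnorm hrC mu hmu)
  have hnormbound : ∀ mu ∈ spectrum ℂ T, ‖mu‖₊ ≤ ‖((1 + ((s : ℝ) : ℂ)) / 2)‖₊ := by
    intro mu hmu
    rw [← NNReal.coe_le_coe, coe_nnnorm, coe_nnnorm, htarget]
    rcases hsub mu hmu with h | h | h | h <;> rw [h]
    · simp; linarith
    · have h1 : ((1 : ℂ) / 2) = (((1 / 2 : ℝ)) : ℂ) := by push_cast; ring
      rw [h1, Complex.norm_real, Real.norm_eq_abs, abs_of_nonneg (by norm_num)]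
      linarith
    · rw [htarget]
    · have h1 : ((1 - ((s : ℝ) : ℂ)) / 2) = (((1 - s) / 2 : ℝ) : ℂ) := by push_cast; ring
      rw [h1, Complex.norm_real, Real.norm_eq_abs, abs_of_nonneg (by linarith)]
      linarith
  have hrad : spectralRadius ℂ T = (‖((1 + ((s : ℝ) : ℂ)) / 2)‖₊ : ENNReal) := by
    apply le_antisymm
    · refine iSup₂_le fun mu hmu => ?_
      exact ENNReal.coe_le_coe.mpr (hnormbound mu hmu)
    · exact le_iSup₂ (f := fun mu (_ : mu ∈ spectrum ℂ T) => (‖mu‖₊ : ENNReal)) _ hmem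
  have hnn : (‖T‖₊ : ENNReal) = (‖((1 + ((s : ℝ) : ℂ)) / 2)‖₊ : ENNReal) := by
    rw [← hsa.spectralRadius_eq_nnnorm, hrad]
  have hnn2 : ‖T‖ = ‖((1 + ((s : ℝ) : ℂ)) / 2)‖ := by
    have h1 := ENNReal.coe_inj.mp hnn
    rw [← coe_nnnorm, ← coe_nnnorm, h1]
  rw [hnn2, htarget]

end Stmt5
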